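/- arXiv:1009.3089 — 2 statements merged into one kernel-verified Lean document; each statement's English description precedes it below -/
import Mathlib

section
/- Spherical Law of Sines: Let a, b, c be unit vectors in Euclidean 3-space that are pairwise neither equal nor antipodal (b ≠ ±a, c ≠ ±a, c ≠ ±b). Then sin(∠_a(b,c)) · sin(dS(a,b)) · sin(dS(a,c)) = sin(∠_b(a,c)) · sin(dS(b,a)) · sin(dS(b,c)). Equivalently, since the sines of the pairwise spherical distances are nonzero, sin(∠_a(b,c)) / sin(dS(b,c)) = sin(∠_b(a,c)) / sin(dS(a,c)). -/
open RealInnerProductSpace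

/-- The spherical distance between two unit vectors. -/
noncomputable def sphDist (x y : EuclideanSpace ℝ (Fin 3)) : ℝ :=
  Real.arccos ⟪x, y⟫

/-- The tangential projection of `b` at `a`. -/
noncomputable def tproj (a b : EuclideanSpace ℝ (Fin 3)) : EuclideanSpace ℝ (Fin 3) :=
  b - ⟪b, a⟫ • a

/-- The spherical angle at `a` between `b` and `c`. -/
noncomputable def sphAngle (a b c : EuclideanSpace ℝ (Fin 3)) : ℝ :=
  InnerProductGeometry.angle (tproj a b) (tproj a c)

/-!
Both products equal `√det G`, where `G` is the Gram matrix of `a, b, c`, which is symmetric in the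
three vectors. Indeed `‖P_a(b)‖ = sin dS(a,b)` and `⟪P_a(b), P_a(c)⟫ = ⟪b,c⟫ - ⟪a,b⟫⟪a,c⟫`, so
`sin ∠_a(b,c) · ‖P_a(b)‖ · ‖P_a(c)‖ = √(‖P_a(b)‖²‖P_a(c)‖² - ⟪P_a(b), P_a(c)⟫²)` expands to `√det G`.
The quotient form follows by cancelling `sin dS(a,b) ≠ 0`.
-/

lemma sphDist_comm (x y : EuclideanSpace ℝ (Fin 3)) : sphDist x y = sphDist y x := by
  rw [sphDist, sphDist, real_inner_comm]

lemma sin_sphDist_pos {x y : EuclideanSpace ℝ (Fin 3)} (hx : ‖x‖ = 1) (hy : ‖y‖ = 1)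
    (hyx : y ≠ x) (hyx' : y ≠ -x) : 0 < Real.sin (sphDist x y) := by
  have h_lt_one : ⟪x, y⟫ < 1 := (inner_lt_one_iff_real_of_norm_eq_one hx hy).mpr hyx.symm
  have h_ne_neg_one : ⟪x, y⟫ ≠ -1 := fun h ↦
    hyx' (by rw [(inner_eq_neg_one_iff_of_norm_eq_one hx hy).mp h, neg_neg])
  have h_gt_neg_one : -1 < ⟪x, y⟫ :=
    (neg_one_le_real_inner_of_norm_eq_one hx hy).lt_of_ne h_ne_neg_one.symm
  exact Real.sin_pos_of_pos_of_lt_pi (Real.arccos_pos.mpr h_lt_one)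
    (Real.arccos_lt_pi.mpr h_gt_neg_one)

lemma inner_tproj_tproj {a : EuclideanSpace ℝ (Fin 3)} (ha : ‖a‖ = 1)
    (b c : EuclideanSpace ℝ (Fin 3)) :
    ⟪tproj a b, tproj a c⟫ = ⟪b, c⟫ - ⟪b, a⟫ * ⟪c, a⟫ := by
  simp only [tproj, inner_sub_left, inner_sub_right, real_inner_smul_left,
    real_inner_smul_right, real_inner_self_eq_norm_sq, ha, real_inner_comm a c]
  ring

lemma norm_tproj {a b : EuclideanSpace ℝ (Fin 3)} (ha : ‖a‖ = 1) (hb : ‖b‖ = 1) :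
    ‖tproj a b‖ = Real.sin (sphDist a b) := by
  rw [norm_eq_sqrt_real_inner, inner_tproj_tproj ha, sphDist, Real.sin_arccos,
    real_inner_self_eq_norm_sq, hb, real_inner_comm a b]
  ring_nf

lemma sin_sphAngle_mul_sin_sphDist_mul_sin_sphDist {a b c : EuclideanSpace ℝ (Fin 3)}
    (ha : ‖a‖ = 1) (hb : ‖b‖ = 1) (hc : ‖c‖ = 1) :
    Real.sin (sphAngle a b c) * Real.sin (sphDist a b) * Real.sin (sphDist a c) =
      √(Matrix.gram ℝ ![a, b, c]).det := by
  rw [← norm_tproj ha hb, ← norm_tproj ha hc, mul_assoc, sphAngle,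
    InnerProductGeometry.sin_angle_mul_norm_mul_norm, inner_tproj_tproj ha,
    inner_tproj_tproj ha, inner_tproj_tproj ha, Matrix.det_fin_three]
  simp only [Matrix.gram_apply, Matrix.cons_val_zero, Matrix.cons_val_one, Matrix.cons_val_two,
    Matrix.head_cons, Matrix.tail_cons, real_inner_self_eq_norm_sq, ha, hb, hc,
    real_inner_comm a b, real_inner_comm a c, real_inner_comm b c]
  ring_nf

lemma det_gram_swap (a b c : EuclideanSpace ℝ (Fin 3)) :
    (Matrix.gram ℝ ![b, a, c]).det = (Matrix.gram ℝ ![a, b, c]).det := by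
  have hswap : ![b, a, c] = ![a, b, c] ∘ Equiv.swap 0 1 := by
    ext1 i; fin_cases i <;> rfl
  rw [hswap, ← Matrix.det_submatrix_equiv_self (Equiv.swap 0 1)]
  rfl

/-- The spherical Law of Sines. -/
theorem spherical_law_of_sines (a b c : EuclideanSpace ℝ (Fin 3))
    (ha : ‖a‖ = 1) (hb : ‖b‖ = 1) (hc : ‖c‖ = 1)
    (hba : b ≠ a) (hba' : b ≠ -a) (hca : c ≠ a) (hca' : c ≠ -a)
    (hcb : c ≠ b) (hcb' : c ≠ -b) :
    Real.sin (sphAngle a b c) * Real.sin (sphDist a b) * Real.sin (sphDist a c) =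
      Real.sin (sphAngle b a c) * Real.sin (sphDist b a) * Real.sin (sphDist b c) ∧
    Real.sin (sphAngle a b c) / Real.sin (sphDist b c) =
      Real.sin (sphAngle b a c) / Real.sin (sphDist a c) := by
  have hprod : Real.sin (sphAngle a b c) * Real.sin (sphDist a b) * Real.sin (sphDist a c) =
      Real.sin (sphAngle b a c) * Real.sin (sphDist b a) * Real.sin (sphDist b c) := by
    rw [sin_sphAngle_mul_sin_sphDist_mul_sin_sphDist ha hb hc,
      sin_sphAngle_mul_sin_sphDist_mul_sin_sphDist hb ha hc, det_gram_swap]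
  refine ⟨hprod, ?_⟩
  have hab := sin_sphDist_pos ha hb hba hba'
  rw [div_eq_div_iff (sin_sphDist_pos hb hc hcb hcb').ne' (sin_sphDist_pos ha hc hca hca').ne']
  rw [sphDist_comm b a] at hprod
  apply mul_right_cancel₀ hab.ne'
  linear_combination hprod
end

section
/- Refinement claim in Burillo's theorem: in the Burillo setup, let r > 0 and let 0 < r' ≤ r/(2+3L). Let 𝔘 and 𝔙 be families of open subsets of A with chosen points a_U ∈ U (U ∈ 𝔘) and a_V ∈ V (V ∈ 𝔙), such that every member of 𝔘 has diameter at most r, every member of 𝔙 has diameter at most r', and 𝔙 refines 𝔘 (every V ∈ 𝔙 is contained in some U ∈ 𝔘). Then for every V ∈ 𝔙 and every v ∈ p⁻¹(a_V) there exist U ∈ 𝔘 with V ⊆ U and x ∈ p⁻¹(a_U) such that W'_{V,v} ⊆ W_{U,x}, where W'_{V,v} is formed with parameter r' and W_{U,x} is formed with parameter r. -/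
/-!
A point of `W'_{V,v}` is within `r'(1 + 3L)` of `v` (one step of length `r'` to the fiber over
`a_V`, then `δ`-distance at most `3r'L` there), and lifting `v` to the fiber over `a_U` costs at
most `r`; as `r'(1 + 3L) ≤ r`, the point is within `2r` of the lift `x`. Lifting it in turn to the
fiber over `a_U` costs another `r`, so that lift is within `3r` of `x`, hence `δ`-close to `x` up
to `3rL`.
-/

/-- In the Burillo setup, the set `W_{U,x}` (formed with parameter `r`): all points `y`
mapping into `U` such that some `y'` in the fiber over `a_U` satisfies `d(y,y') ≤ r`
and `δ_{a_U}(y',x) ≤ 3rL`. -/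
def burilloW {X A : Type*} [MetricSpace X] (p : X → A) (δ : A → X → X → ℝ)
    (L r : ℝ) (U : Set A) (aU : A) (x : X) : Set X :=
  {y | p y ∈ U ∧ ∃ y', p y' = aU ∧ dist y y' ≤ r ∧ δ aU y' x ≤ 3 * r * L}

theorem dist_le_of_mem_burilloW {X A : Type*} [MetricSpace X] {p : X → A}
    {δ : A → X → X → ℝ} {L s : ℝ} {V : Set A} {a : A} {v y : X}
    (hδ : ∀ a x y, p x = a → p y = a → dist x y ≤ δ a x y) (hv : p v = a)
    (hy : y ∈ burilloW p δ L s V a v) :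
    dist y v ≤ s * (1 + 3 * L) := by
  obtain ⟨-, y', hy', hyy', hy'v⟩ := hy
  calc dist y v ≤ dist y y' + dist y' v := dist_triangle y y' v
    _ ≤ s + 3 * s * L := add_le_add hyy' ((hδ a y' v hy' hv).trans hy'v)
    _ = s * (1 + 3 * L) := by ring

theorem mem_burilloW_of_dist_le {X A : Type*} [MetricSpace X] [MetricSpace A] {p : X → A}
    {δ : A → X → X → ℝ} {L r : ℝ} {U : Set A} {a : A} {x y : X}
    (hlift : ∀ (a : A) (x : X), ∃ y, p y = a ∧ dist x y = dist (p x) a) (hL : 0 ≤ L)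
    (hδ : ∀ a x y, p x = a → p y = a → δ a x y ≤ L * dist x y)
    (hU : ∀ b ∈ U, dist b a ≤ r) (hx : p x = a) (hyU : p y ∈ U) (hyx : dist y x ≤ 2 * r) :
    y ∈ burilloW p δ L r U a x := by
  obtain ⟨y', hy', hyy'⟩ := hlift a y
  have hyy'_le : dist y y' ≤ r := hyy' ▸ hU _ hyU
  refine ⟨hyU, y', hy', hyy'_le, ?_⟩
  calc δ a y' x ≤ L * dist y' x := hδ a y' x hy' hx
    _ ≤ L * (dist y' y + dist y x) := by gcongr; exact dist_triangle y' y x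
    _ ≤ L * (r + 2 * r) := by rw [dist_comm]; gcongr
    _ = 3 * r * L := by ring

theorem burilloW_refines_general {X A : Type*} [MetricSpace X] [MetricSpace A]
    (p : X → A)
    (hlift : ∀ (a : A) (x : X), ∃ y, p y = a ∧ dist x y = dist (p x) a)
    (L : ℝ) (hL : 1 ≤ L) (δ : A → X → X → ℝ)
    (hδdist : ∀ a x y, p x = a → p y = a →
      dist x y ≤ δ a x y ∧ δ a x y ≤ L * dist x y)
    (r r' : ℝ) (hr'le : r' ≤ r / (2 + 3 * L))
    (𝔘 𝔙 : Set (Set A))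
    (ch : Set A → A) (hchU : ∀ U ∈ 𝔘, ch U ∈ U) (hchV : ∀ V ∈ 𝔙, ch V ∈ V)
    (hUdiam : ∀ U ∈ 𝔘, ∀ a ∈ U, ∀ a' ∈ U, dist a a' ≤ r)
    (hrefine : ∀ V ∈ 𝔙, ∃ U ∈ 𝔘, V ⊆ U) :
    ∀ V ∈ 𝔙, ∀ v : X, p v = ch V →
      ∃ U ∈ 𝔘, V ⊆ U ∧ ∃ x : X, p x = ch U ∧
        burilloW p δ L r' V (ch V) v ⊆ burilloW p δ L r U (ch U) x := by
  intro V hV v hv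
  obtain ⟨U, hU, hVU⟩ := hrefine V hV
  obtain ⟨x, hx, hvx⟩ := hlift (ch U) v
  refine ⟨U, hU, hVU, x, hx, fun y hy => ?_⟩
  have hvx_le : dist v x ≤ r := hvx ▸ hv ▸ hUdiam U hU _ (hVU (hchV V hV)) _ (hchU U hU)
  have hyv := dist_le_of_mem_burilloW (fun a x y hx hy => (hδdist a x y hx hy).1) hv hy
  have hr' : r' * (1 + 3 * L) ≤ r := by
    rw [le_div_iff₀ (by linarith)] at hr'le
    nlinarith [dist_nonneg.trans hvx_le]
  refine mem_burilloW_of_dist_le hlift (by linarith) (fun a x y hx hy => (hδdist a x y hx hy).2)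
    (fun b hb => hUdiam U hU b hb _ (hchU U hU)) hx (hVU hy.1) ?_
  linarith [dist_triangle y v x]

theorem burilloW_refines {X A : Type*} [MetricSpace X] [MetricSpace A]
    (p : X → A) (hp : Continuous p)
    (hlift : ∀ (a : A) (x : X), ∃ y, p y = a ∧ dist x y = dist (p x) a)
    (L : ℝ) (hL : 1 ≤ L) (δ : A → X → X → ℝ)
    (hδsymm : ∀ a x y, p x = a → p y = a → δ a x y = δ a y x)
    (hδzero : ∀ a x y, p x = a → p y = a → (δ a x y = 0 ↔ x = y))
    (hδultra : ∀ a x y z, p x = a → p y = a → p z = a →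
      δ a x z ≤ max (δ a x y) (δ a y z))
    (hδdist : ∀ a x y, p x = a → p y = a →
      dist x y ≤ δ a x y ∧ δ a x y ≤ L * dist x y)
    (r r' : ℝ) (hr : 0 < r) (hr' : 0 < r') (hr'le : r' ≤ r / (2 + 3 * L))
    (𝔘 𝔙 : Set (Set A))
    (hUopen : ∀ U ∈ 𝔘, IsOpen U) (hVopen : ∀ V ∈ 𝔙, IsOpen V)
    (ch : Set A → A) (hchU : ∀ U ∈ 𝔘, ch U ∈ U) (hchV : ∀ V ∈ 𝔙, ch V ∈ V)
    (hUdiam : ∀ U ∈ 𝔘, ∀ a ∈ U, ∀ a' ∈ U, dist a a' ≤ r)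
    (hVdiam : ∀ V ∈ 𝔙, ∀ a ∈ V, ∀ a' ∈ V, dist a a' ≤ r')
    (hrefine : ∀ V ∈ 𝔙, ∃ U ∈ 𝔘, V ⊆ U) :
    ∀ V ∈ 𝔙, ∀ v : X, p v = ch V →
      ∃ U ∈ 𝔘, V ⊆ U ∧ ∃ x : X, p x = ch U ∧
        burilloW p δ L r' V (ch V) v ⊆ burilloW p δ L r U (ch U) x :=
  burilloW_refines_general p hlift L hL δ hδdist r r' hr'le 𝔘 𝔙 ch hchU hchV hUdiam hrefine
end
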